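/- Let (R, m) be a Noetherian local ring and M an Artinian R-module containing a submodule isomorphic to the injective hull E(R/m) of the residue field. Then Ann_R(0 :_M p) = p for every prime ideal p of R containing Ann_R(M). -/

import Mathlib

/-!
Let `r ∉ p`. Multiplication by `r` is injective on the domain `R ⧸ p`, so by injectivity of `E`
the map `R ⧸ p → E`, `1 ↦ i 1` (well defined because `p ⊆ m`), extends along it. The image `e`
of `1` under the extension is killed by `p` while `r • e = i 1 ≠ 0`; hence `j e ∈ (0 :_M p)` is
not killed by `r`.

Injectivity of `E` is only usable through Baer's criterion, which needs `R` to be small relative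
to `E`. This holds because `R` embeds into `∏ₙ R ⧸ mⁿ` (Krull's intersection theorem), and each
`R ⧸ mⁿ` is filtered by finitely generated modules over the residue field `R ⧸ m ↪ E`.
-/

universe v

section

variable {R : Type*} [CommRing R]

theorem small_of_le_annihilator {N : Type*} [AddCommGroup N] [Module R N] [Module.Finite R N]
    (I : Ideal R) [Small.{v} (R ⧸ I)] (hN : I ≤ Module.annihilator R N) : Small.{v} N := by
  let := ((Module.isTorsionBySet_iff_subset_annihilator R N).mpr hN).module
  have : Module.Finite (R ⧸ I) N := .of_restrictScalars_finite R _ _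
  exact Module.Finite.small (R ⧸ I) N

theorem small_of_pow_le_annihilator [IsNoetherianRing R] (I : Ideal R) [Small.{v} (R ⧸ I)]
    (n : ℕ) {N : Type*} [AddCommGroup N] [Module R N] [Module.Finite R N]
    (hN : I ^ n ≤ Module.annihilator R N) : Small.{v} N := by
  induction n generalizing N with
  | zero =>
    have : Subsingleton N := by
      rwa [pow_zero, Ideal.one_eq_top, top_le_iff, Module.annihilator_eq_top_iff] at hN
    exact small_subsingleton N
  | succ n ih =>
    let A : Submodule R N := I • ⊤
    have : Small.{v} A := ih <| by
      rwa [← Submodule.annihilator_top, Submodule.le_annihilator_iff, pow_succ,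
        Submodule.mul_smul, ← Submodule.le_annihilator_iff] at hN
    have : Small.{v} (N ⧸ A) := small_of_le_annihilator I <|
      (Module.isTorsionBySet_iff_subset_annihilator R _).mp
        (Module.isTorsionBySet_quotient_ideal_smul N I)
    have : Small.{v} (N ⧸ A.toAddSubgroup) := ‹Small.{v} (N ⧸ A)›
    have : Small.{v} A.toAddSubgroup := ‹Small.{v} A›
    exact small_of_injective (AddSubgroup.addGroupEquivQuotientProdAddSubgroup
      (s := A.toAddSubgroup)).injective

theorem small_of_iInf_pow_eq_bot [IsNoetherianRing R] (I : Ideal R) [Small.{v} (R ⧸ I)]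
    (hI : ⨅ n : ℕ, I ^ n = ⊥) : Small.{v} R := by
  have (n : ℕ) : Small.{v} (R ⧸ I ^ n) :=
    small_of_pow_le_annihilator I n Ideal.annihilator_quotient.ge
  refine small_of_injective (f := RingHom.pi fun n : ℕ ↦ Ideal.Quotient.mk (I ^ n)) ?_
  rw [RingHom.injective_iff_ker_eq_bot, Ideal.ker_Pi_Quotient_mk, hI]

theorem LinearMap.apply_one_mem_torsionBySet {Q : Type*} [AddCommGroup Q] [Module R Q]
    {I : Ideal R} (f : (R ⧸ I) →ₗ[R] Q) : f 1 ∈ Submodule.torsionBySet R Q I :=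
  (Submodule.mem_torsionBySet_iff _ _).mpr fun ⟨s, hs⟩ ↦ by
    rw [← map_smul, Algebra.smul_def, mul_one, Ideal.Quotient.algebraMap_eq,
      Ideal.Quotient.eq_zero_iff_mem.mpr hs, map_zero]

theorem Module.Baer.exists_smul_eq_of_mem_torsionBySet {Q : Type*} [AddCommGroup Q] [Module R Q]
    (hQ : Module.Baer R Q) {p : Ideal R} [p.IsPrime] {r : R} (hr : r ∉ p) {q : Q}
    (hq : q ∈ Submodule.torsionBySet R Q p) :
    ∃ e ∈ Submodule.torsionBySet R Q p, r • e = q := by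
  let u := LinearMap.mulLeft R (Ideal.Quotient.mk p r)
  have hu : Function.Injective u :=
    mul_right_injective₀ (Ideal.Quotient.eq_zero_iff_mem.not.mpr hr)
  let g : (R ⧸ p) →ₗ[R] Q := p.liftQ (LinearMap.toSpanSingleton R Q q) fun s hs ↦
    (Submodule.mem_torsionBySet_iff _ _).mp hq ⟨s, hs⟩
  obtain ⟨h, hh⟩ := hQ.extension_property u hu g
  refine ⟨h 1, h.apply_one_mem_torsionBySet, ?_⟩
  calc r • h 1 = h (u 1) := by
        rw [← map_smul, LinearMap.mulLeft_apply, mul_one, Algebra.smul_def, mul_one,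
          Ideal.Quotient.algebraMap_eq]
    _ = g (Submodule.Quotient.mk 1) := by rw [← LinearMap.comp_apply, hh]; rfl
    _ = q := (p.liftQ_apply _ _).trans (one_smul R q)

namespace Submodule

theorem le_annihilator_torsionBySet {M : Type*} [AddCommGroup M] [Module R M] (p : Ideal R) :
    p ≤ (torsionBySet R M p).annihilator :=
  (torsion_gc R M).l_u_le (OrderDual.toDual p)

theorem annihilator_torsionBySet_le_of_baer {M E : Type*} [AddCommGroup M] [Module R M]
    [AddCommGroup E] [Module R E] (hE : Module.Baer R E) {j : E →ₗ[R] M}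
    (hj : Function.Injective j) {p : Ideal R} [p.IsPrime]
    (hp : torsionBySet R E p ≠ ⊥) : (torsionBySet R M p).annihilator ≤ p := by
  intro r hr
  by_contra hrp
  obtain ⟨q, hq, hq0⟩ := exists_mem_ne_zero_of_ne_bot hp
  obtain ⟨e, he, rfl⟩ := hE.exists_smul_eq_of_mem_torsionBySet hrp hq
  have hje : j e ∈ torsionBySet R M p := (mem_torsionBySet_iff _ _).mpr fun s ↦ by
    rw [← map_smul, (mem_torsionBySet_iff _ _).mp he s, map_zero]
  apply hq0
  apply hj
  rw [map_smul, map_zero]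
  exact mem_annihilator.mp hr _ hje

end Submodule

end

theorem annihilator_torsionBySet_eq_of_contains_injective_hull_general
    (R M : Type*) [CommRing R] [IsNoetherianRing R] [IsLocalRing R]
    [AddCommGroup M] [Module R M]
    (E : Type*) [AddCommGroup E] [Module R E]
    (hEinj : Module.Injective R E)
    (i : (R ⧸ IsLocalRing.maximalIdeal R) →ₗ[R] E) (hi : Function.Injective i)
    (j : E →ₗ[R] M) (hj : Function.Injective j) :
    ∀ p : Ideal R, p.IsPrime → Module.annihilator R M ≤ p →
      (Submodule.torsionBySet R M (p : Set R)).annihilator = p := by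
  intro p hp _
  have : Small.{_} (R ⧸ IsLocalRing.maximalIdeal R) := small_of_injective hi
  have : Small.{_} R := small_of_iInf_pow_eq_bot _ <|
    Ideal.iInf_pow_eq_bot_of_isLocalRing _ (IsLocalRing.maximalIdeal.isMaximal R).ne_top
  have hi1 : i 1 ∈ Submodule.torsionBySet R E p :=
    Submodule.torsionBySet_le_torsionBySet_of_subset (IsLocalRing.le_maximalIdeal hp.ne_top)
      i.apply_one_mem_torsionBySet
  have hp_torsion : Submodule.torsionBySet R E p ≠ ⊥ :=
    (Submodule.ne_bot_iff _).mpr ⟨i 1, hi1, (map_ne_zero_iff i hi).mpr one_ne_zero⟩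
  exact le_antisymm (Submodule.annihilator_torsionBySet_le_of_baer (.of_injective hEinj) hj
    hp_torsion) (Submodule.le_annihilator_torsionBySet p)

/-- Let `(R, m)` be a Noetherian local ring and `M` an Artinian `R`-module
containing a submodule isomorphic to the injective hull `E(R/m)` of the residue field (an
injective module `E` in which the image of `R/m` is essential). Then `Ann_R(0 :_M p) = p` for
every prime ideal `p ⊇ Ann_R(M)`. -/
theorem annihilator_torsionBySet_eq_of_contains_injective_hull
    (R M : Type*) [CommRing R] [IsNoetherianRing R] [IsLocalRing R]
    [AddCommGroup M] [Module R M] [IsArtinian R M]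
    (E : Type*) [AddCommGroup E] [Module R E]
    (hEinj : Module.Injective R E)
    (i : (R ⧸ IsLocalRing.maximalIdeal R) →ₗ[R] E) (hi : Function.Injective i)
    (hess : ∀ N : Submodule R E, N ≠ ⊥ → N ⊓ LinearMap.range i ≠ ⊥)
    (j : E →ₗ[R] M) (hj : Function.Injective j) :
    ∀ p : Ideal R, p.IsPrime → Module.annihilator R M ≤ p →
      (Submodule.torsionBySet R M (p : Set R)).annihilator = p :=
  annihilator_torsionBySet_eq_of_contains_injective_hull_general R M E hEinj i hi j hj
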